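/- arXiv:2310.08563 — 2 statements merged into one kernel-verified Lean document; each statement's English description precedes it below -/
import Mathlib

section
/- Let S be a finite set with n ≥ 3 elements. Then the complement of the (n-1)-partition graph G[S, n-1] is isomorphic to the Kneser graph K(n,2), whose vertices are the 2-element subsets of S and in which two 2-element subsets are adjacent if and only if they are disjoint. -/
/-!
A partition of an `n`-set into `n - 1` nonempty parts has part sizes summing to `n`, so exactly
one part is a pair `t` and all others are singletons; this identifies the vertices with the
pairs of `S`. For distinct pairs `t ≠ u`, deleting `x` makes the two partitions agree exactly
when `x ∈ t ∩ u`: if, say, `x ∉ t`, then `t` survives as a part on one side but not on the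
other. As distinct pairs share at most one point, the partitions are at distance one iff the
pairs meet, so in the complement they are adjacent iff the pairs are disjoint.
-/

open Finset

/-- The parts of a partition after removing the point `x`, discarding empty parts. -/
def eraseParts {α : Type*} [DecidableEq α] (parts : Finset (Finset α)) (x : α) :
    Finset (Finset α) :=
  (parts.image fun t => t.erase x).filter fun t => t.Nonempty

/-- The `r`-partition graph of a finite set `S`: vertices are the partitions of `S`
into exactly `r` nonempty parts, and two partitions are adjacent iff their partition
distance is `1`, i.e. there is exactly one element `x ∈ S` whose removal makes the two
partitions agree on `S \ {x}`. -/
def partitionGraph {α : Type*} [DecidableEq α] (S : Finset α) (r : ℕ) :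
    SimpleGraph {P : Finpartition S // P.parts.card = r} where
  Adj P Q := P ≠ Q ∧ ∃! x, x ∈ S ∧ eraseParts P.1.parts x = eraseParts Q.1.parts x
  symm := by
    constructor
    rintro P Q ⟨hne, x, ⟨hx1, hx2⟩, hu⟩
    exact ⟨hne.symm, x, ⟨hx1, hx2.symm⟩, fun y hy => hu y ⟨hy.1, hy.2.symm⟩⟩
  loopless := ⟨by rintro P ⟨h, -⟩; exact h rfl⟩

/-- The Kneser graph `K(n,2)` on the `2`-element subsets of a finite set `S`: two
`2`-element subsets are adjacent iff they are disjoint. -/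
def kneserGraphTwo {α : Type*} [DecidableEq α] (S : Finset α) :
    SimpleGraph {t : Finset α // t ⊆ S ∧ t.card = 2} where
  Adj a b := Disjoint a.1 b.1
  symm := ⟨fun _ _ h => h.symm⟩
  loopless := by
    constructor
    rintro ⟨t, hts, ht2⟩ h
    rw [disjoint_self] at h
    subst h
    simp at ht2

namespace Finset

variable {ι α : Type*}

theorem exists_eq_two_of_sum_eq_card_add_one {s : Finset ι} {f : ι → ℕ}
    (hpos : ∀ i ∈ s, 1 ≤ f i) (hsum : ∑ i ∈ s, f i = #s + 1) :
    ∃ i ∈ s, f i = 2 ∧ ∀ j ∈ s, j ≠ i → f j = 1 := by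
  classical
  have hexcess : ∑ i ∈ s, (f i - 1) = 1 := by
    have : ∑ i ∈ s, f i = ∑ i ∈ s, (f i - 1) + #s := by
      rw [card_eq_sum_ones, ← sum_add_distrib]
      exact sum_congr rfl fun i hi => by have := hpos i hi; omega
    omega
  obtain ⟨i, hi, hfi⟩ : ∃ i ∈ s, f i - 1 ≠ 0 := by
    by_contra! h
    rw [sum_eq_zero h] at hexcess
    exact zero_ne_one hexcess
  have hsplit := sum_erase_add s (fun j => f j - 1) hi
  have hrest : ∑ j ∈ s.erase i, (f j - 1) = 0 := by omega
  refine ⟨i, hi, by omega, fun j hj hji => ?_⟩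
  have := sum_eq_zero_iff.1 hrest j (mem_erase.2 ⟨hji, hj⟩)
  have := hpos j hj
  omega

theorem existsUnique_mem_and_mem_of_card_eq_two [DecidableEq α] {t u : Finset α}
    (ht : #t = 2) (hu : #u = 2) (hne : t ≠ u) (hd : ¬Disjoint t u) :
    ∃! x, x ∈ t ∧ x ∈ u := by
  obtain ⟨a, hat, hau⟩ := not_disjoint_iff.1 hd
  refine ⟨a, ⟨hat, hau⟩, fun b ⟨hbt, hbu⟩ => by_contra fun hba => hne ?_⟩
  have hcard : #({b, a} : Finset α) = 2 := card_pair hba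
  rw [← eq_of_subset_of_card_le (insert_subset hbt (singleton_subset_iff.2 hat)) (by omega),
    ← eq_of_subset_of_card_le (insert_subset hbu (singleton_subset_iff.2 hau)) (by omega)]

end Finset

theorem mem_eraseParts {α : Type*} [DecidableEq α] {parts : Finset (Finset α)} {x : α}
    {s : Finset α} : s ∈ eraseParts parts x ↔ s.Nonempty ∧ ∃ p ∈ parts, p.erase x = s := by
  simp only [eraseParts, mem_filter, mem_image]
  tauto

namespace Finpartition

variable {α : Type*} [DecidableEq α] {S t u : Finset α}

/-- The finest partition of `S` having `t` as a part. -/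
def ofBlock (hts : t ⊆ S) (ht : t.Nonempty) : Finpartition S :=
  (⊥ : Finpartition (S \ t)).extend ht.ne_empty sdiff_disjoint (sdiff_union_of_subset hts)

variable {hts : t ⊆ S} {ht : t.Nonempty} {hus : u ⊆ S} {hu : u.Nonempty} {x : α}

theorem mem_ofBlock_parts {p : Finset α} :
    p ∈ (ofBlock hts ht).parts ↔ p = t ∨ ∃ a ∈ S \ t, {a} = p := by
  simp only [ofBlock, extend_parts, mem_insert, mem_bot_iff]

theorem card_ofBlock_parts : #(ofBlock hts ht).parts + #t = #S + 1 := by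
  rw [ofBlock, card_extend, card_bot, card_sdiff_of_subset hts]
  have := card_le_card hts
  omega

theorem eq_of_ofBlock_eq (ht1 : #t ≠ 1) (h : ofBlock hts ht = ofBlock hus hu) : t = u := by
  have : t ∈ (ofBlock hus hu).parts := h ▸ mem_ofBlock_parts.2 (Or.inl rfl)
  obtain rfl | ⟨a, -, rfl⟩ := mem_ofBlock_parts.1 this
  · rfl
  · exact absurd (card_singleton a) ht1

theorem eq_ofBlock {P : Finpartition S} (ht : t ∈ P.parts)
    (hrest : ∀ p ∈ P.parts, p ≠ t → #p = 1) :
    P = ofBlock (P.le ht) (P.nonempty_of_mem_parts ht) := by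
  ext s
  rw [mem_ofBlock_parts]
  constructor
  · intro hs
    refine or_iff_not_imp_left.2 fun hst => ?_
    obtain ⟨a, rfl⟩ := card_eq_one.1 (hrest s hs hst)
    have hat : a ∉ t := fun hat =>
      disjoint_left.1 (P.disjoint hs ht hst) (mem_singleton_self a) hat
    exact ⟨a, mem_sdiff.2 ⟨P.le hs (mem_singleton_self a), hat⟩, rfl⟩
  · rintro (rfl | ⟨a, ha, rfl⟩)
    · exact ht
    · obtain ⟨haS, hat⟩ := mem_sdiff.1 ha
      have hpt : P.part a ≠ t := fun h => hat (h ▸ P.mem_part haS)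
      have hpart : P.part a = {a} := by
        obtain ⟨b, hb⟩ := card_eq_one.1 (hrest _ (P.part_mem.2 haS) hpt)
        have hab : a ∈ ({b} : Finset α) := hb ▸ P.mem_part haS
        rw [hb, mem_singleton.1 hab]
      exact hpart ▸ P.part_mem.2 haS

theorem exists_part_card_eq_two {P : Finpartition S} (h : #P.parts + 1 = #S) :
    ∃ t ∈ P.parts, #t = 2 ∧ ∀ p ∈ P.parts, p ≠ t → #p = 1 :=
  exists_eq_two_of_sum_eq_card_add_one
    (fun _ hp => card_pos.2 (P.nonempty_of_mem_parts hp)) (P.sum_card_parts.trans h.symm)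

theorem eraseParts_ofBlock_of_mem (ht2 : #t = 2) (hx : x ∈ t) :
    eraseParts (ofBlock hts ht).parts x = (⊥ : Finpartition (S.erase x)).parts := by
  obtain ⟨y, hyx, rfl⟩ : ∃ y, y ≠ x ∧ t = {x, y} := by
    obtain ⟨a, b, hab, rfl⟩ := card_eq_two.1 ht2
    simp only [mem_insert, mem_singleton] at hx
    rcases hx with rfl | rfl
    · exact ⟨b, hab.symm, rfl⟩
    · exact ⟨a, hab, pair_comm _ _⟩
  ext s
  simp only [mem_eraseParts, mem_ofBlock_parts, mem_bot_iff]
  have hxy : x ∉ ({y} : Finset α) := by simpa using hyx.symm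
  constructor
  · rintro ⟨-, p, rfl | ⟨a, ha, rfl⟩, rfl⟩
    · exact ⟨y, mem_erase.2 ⟨hyx, hts (by simp)⟩, (erase_insert hxy).symm⟩
    · obtain ⟨haS, hat⟩ := mem_sdiff.1 ha
      have hax : a ≠ x := fun h => hat (h ▸ mem_insert_self x {y})
      exact ⟨a, mem_erase.2 ⟨hax, haS⟩, (erase_eq_of_notMem (by simpa using hax.symm)).symm⟩
  · rintro ⟨a, ha, rfl⟩
    refine ⟨singleton_nonempty a, ?_⟩
    by_cases hay : a = y
    · exact ⟨{x, y}, Or.inl rfl, by rw [erase_insert hxy, hay]⟩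
    · obtain ⟨hax, haS⟩ := mem_erase.1 ha
      refine ⟨{a}, Or.inr ⟨a, mem_sdiff.2 ⟨haS, by simp [hax, hay]⟩, rfl⟩, ?_⟩
      exact erase_eq_of_notMem (by simpa using hax.symm)

theorem mem_eraseParts_ofBlock_iff (ht2 : #t = 2) (hu2 : #u = 2) :
    u ∈ eraseParts (ofBlock hts ht).parts x ↔ u = t ∧ x ∉ t := by
  rw [mem_eraseParts]
  constructor
  · rintro ⟨-, p, hp, rfl⟩
    obtain rfl | ⟨a, -, rfl⟩ := mem_ofBlock_parts.1 hp
    · by_cases hxp : x ∈ p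
      · rw [card_erase_of_mem hxp] at hu2
        omega
      · exact ⟨erase_eq_of_notMem hxp, hxp⟩
    · have := (card_le_card (erase_subset x {a})).trans_eq (card_singleton a)
      omega
  · rintro ⟨rfl, hxu⟩
    exact ⟨card_pos.1 (by omega), u, mem_ofBlock_parts.2 (Or.inl rfl), erase_eq_of_notMem hxu⟩

theorem eraseParts_ofBlock_eq_iff (ht2 : #t = 2) (hu2 : #u = 2) (hne : t ≠ u) :
    eraseParts (ofBlock hts ht).parts x = eraseParts (ofBlock hus hu).parts x ↔
      x ∈ t ∧ x ∈ u := by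
  constructor
  · intro h
    refine ⟨by_contra fun hxt => hne ?_, by_contra fun hxu => hne ?_⟩
    · have ht_mem : t ∈ eraseParts (ofBlock hts ht).parts x :=
        (mem_eraseParts_ofBlock_iff ht2 ht2).2 ⟨rfl, hxt⟩
      rw [h, mem_eraseParts_ofBlock_iff hu2 ht2] at ht_mem
      exact ht_mem.1
    · have hu_mem : u ∈ eraseParts (ofBlock hus hu).parts x :=
        (mem_eraseParts_ofBlock_iff hu2 hu2).2 ⟨rfl, hxu⟩
      rw [← h, mem_eraseParts_ofBlock_iff ht2 hu2] at hu_mem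
      exact hu_mem.1.symm
  · rintro ⟨hxt, hxu⟩
    rw [eraseParts_ofBlock_of_mem ht2 hxt, eraseParts_ofBlock_of_mem hu2 hxu]

theorem partitionGraph_adj_ofBlock {r : ℕ} (ht2 : #t = 2) (hu2 : #u = 2)
    (hP : #(ofBlock hts ht).parts = r) (hQ : #(ofBlock hus hu).parts = r) :
    (partitionGraph S r).Adj ⟨ofBlock hts ht, hP⟩ ⟨ofBlock hus hu, hQ⟩ ↔
      t ≠ u ∧ ¬Disjoint t u := by
  by_cases htu : t = u
  · subst htu
    simp [partitionGraph]
  have hPQ : (⟨ofBlock hts ht, hP⟩ : {P : Finpartition S // #P.parts = r}) ≠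
      ⟨ofBlock hus hu, hQ⟩ := fun h => htu (eq_of_ofBlock_eq (by omega) (Subtype.mk.inj h))
  have hcommon : ∀ x, x ∈ S ∧ eraseParts (ofBlock hts ht).parts x =
      eraseParts (ofBlock hus hu).parts x ↔ x ∈ t ∧ x ∈ u := fun x => by
    rw [eraseParts_ofBlock_eq_iff ht2 hu2 htu]
    exact ⟨And.right, fun hx => ⟨hts hx.1, hx⟩⟩
  simp only [partitionGraph, existsUnique_congr hcommon]
  exact ⟨fun ⟨_, x, hx, _⟩ => ⟨htu, not_disjoint_iff.2 ⟨x, hx⟩⟩,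
    fun ⟨_, hd⟩ => ⟨hPQ, existsUnique_mem_and_mem_of_card_eq_two ht2 hu2 htu hd⟩⟩

theorem card_ofBlock_parts_of_card_eq_two (ht2 : #t = 2) :
    #(ofBlock hts ht).parts = #S - 1 := by
  have := card_ofBlock_parts (hts := hts) (ht := ht)
  omega

end Finpartition

section

variable {α : Type*} [DecidableEq α] {S : Finset α}

noncomputable def pairsEquivPartitions (hS : S.Nonempty) :
    {t : Finset α // t ⊆ S ∧ #t = 2} ≃ {P : Finpartition S // #P.parts = #S - 1} :=
  Equiv.ofBijective
    (fun t => ⟨Finpartition.ofBlock t.2.1 (card_pos.1 (by omega)),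
      Finpartition.card_ofBlock_parts_of_card_eq_two t.2.2⟩)
    ⟨fun t u h => Subtype.ext (Finpartition.eq_of_ofBlock_eq (by omega) (Subtype.mk.inj h)),
      fun ⟨P, hP⟩ => by
        obtain ⟨t, ht, ht2, hrest⟩ :=
          P.exists_part_card_eq_two (by have := card_pos.2 hS; omega)
        exact ⟨⟨t, P.le ht, ht2⟩, Subtype.ext (P.eq_ofBlock ht hrest).symm⟩⟩

theorem pairsEquivPartitions_apply (hS : S.Nonempty) (t : {t : Finset α // t ⊆ S ∧ #t = 2}) :
    pairsEquivPartitions hS t = ⟨Finpartition.ofBlock t.2.1 (card_pos.1 (by omega)),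
      Finpartition.card_ofBlock_parts_of_card_eq_two t.2.2⟩ :=
  rfl

noncomputable def kneserGraphTwoIsoComplPartitionGraph (hS : S.Nonempty) :
    kneserGraphTwo S ≃g (partitionGraph S (#S - 1))ᶜ where
  toEquiv := pairsEquivPartitions hS
  map_rel_iff' {t u} := by
    obtain ⟨t, hts, ht2⟩ := t
    obtain ⟨u, hus, hu2⟩ := u
    have hne_of_disjoint : Disjoint t u → t ≠ u := by
      rintro hd rfl
      simp [disjoint_self.1 hd] at ht2
    rw [SimpleGraph.compl_adj, (pairsEquivPartitions hS).injective.ne_iff, ne_eq,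
      Subtype.mk.injEq, pairsEquivPartitions_apply, pairsEquivPartitions_apply,
      Finpartition.partitionGraph_adj_ofBlock ht2 hu2]
    change _ ↔ Disjoint t u
    tauto

end

/-- For an `n`-element set `S` with `n ≥ 3`, the complement of the `(n-1)`-partition
graph `G[S, n-1]` is isomorphic to the Kneser graph `K(n,2)`. -/
theorem compl_partitionGraph_iso_kneser {α : Type*} [DecidableEq α] (S : Finset α)
    (n : ℕ) (hn : S.card = n) (h3 : 3 ≤ n) :
    Nonempty ((partitionGraph S (n - 1))ᶜ ≃g kneserGraphTwo S) := by
  subst hn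
  exact ⟨(kneserGraphTwoIsoComplPartitionGraph (card_pos.1 (by omega))).symm⟩
end

section
/- For any finite set S of points in ℝ^d, the Radon partition graph G_T[S,2] is connected. -/
/-!
A partition `{A, S \ A}` is a Radon partition exactly when some affine dependence `v` of `S`
(weights summing to zero with `∑ v y • y = 0`) is positive only on `A` and negative only off
`A`;
call such a partition compatible with `v`. All partitions compatible with one `v` are connected
by moving single points, since every intermediate partition is still compatible with `v`.
Partitions compatible with two dependences `v`, `w` are connected by induction on the number of
points where `v` and `w` have opposite signs: at such a point `x` the dependence
`|w x| • v + |v x| • w` vanishes and conflicts with `v` and with `w` at fewer points. If it is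
zero on all of `S`, then `w` is a negative multiple of `v`, which is compatible with the same
partitions with the sides swapped.
-/

open Finset

noncomputable instance (d : ℕ) : DecidableEq (EuclideanSpace ℝ (Fin d)) :=
  Classical.decEq _

/-- A Tverberg partition: the convex hulls of all the parts have a common point. -/
def Finpartition.IsTverberg {d : ℕ} {S : Finset (EuclideanSpace ℝ (Fin d))}
    (P : Finpartition S) : Prop :=
  (⋂ t ∈ P.parts, convexHull ℝ (t : Set (EuclideanSpace ℝ (Fin d)))).Nonempty

/-- Vertices of the Tverberg `r`-partition graph of `S`: Tverberg partitions of `S`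
into `r` parts. -/
def TverbergPartition {d : ℕ} (S : Finset (EuclideanSpace ℝ (Fin d))) (r : ℕ) :=
  {P : Finpartition S // P.parts.card = r ∧ P.IsTverberg}

/-- The Tverberg `r`-partition graph of `S`: two Tverberg partitions are adjacent iff
there is exactly one point `x ∈ S` whose removal from its part in each partition yields
the same partition of `S \ {x}`. -/
def tverbergGraph {d : ℕ} (S : Finset (EuclideanSpace ℝ (Fin d))) (r : ℕ) :
    SimpleGraph (TverbergPartition S r) where
  Adj P Q := P ≠ Q ∧ ∃! x, x ∈ S ∧ eraseParts P.1.parts x = eraseParts Q.1.parts x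
  symm := by
    refine ⟨?_⟩
    rintro P Q ⟨hne, x, ⟨hx1, hx2⟩, hu⟩
    exact ⟨hne.symm, x, ⟨hx1, hx2.symm⟩, fun y hy => hu y ⟨hy.1, hy.2.symm⟩⟩
  loopless := ⟨by rintro P ⟨h, -⟩; exact h rfl⟩

section PosSide

variable {V : Type*} {S A : Finset V} {v w : V → ℝ}

structure IsPosSide (S : Finset V) (v : V → ℝ) (A : Finset V) : Prop where
  subset : A ⊆ S
  mem_of_pos : ∀ y ∈ S, 0 < v y → y ∈ A
  notMem_of_neg : ∀ y ∈ S, v y < 0 → y ∉ A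

lemma isPosSide_filter_pos : IsPosSide S v {y ∈ S | 0 < v y} where
  subset := filter_subset _ _
  mem_of_pos _ hy h := mem_filter.2 ⟨hy, h⟩
  notMem_of_neg _ _ h h' := (mem_filter.1 h').2.not_gt h

namespace IsPosSide

variable [DecidableEq V]

lemma erase (hA : IsPosSide S v A) {x : V} (hx : ¬0 < v x) : IsPosSide S v (A.erase x) where
  subset := (erase_subset _ _).trans hA.subset
  mem_of_pos y hy h := mem_erase.2 ⟨fun hyx => hx (hyx ▸ h), hA.mem_of_pos y hy h⟩
  notMem_of_neg y hy h h' := hA.notMem_of_neg y hy h (mem_of_mem_erase h')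

lemma sdiff_of_smul_add_smul_eq_zero {a b : ℝ} (ha : 0 < a) (hb : 0 < b)
    (h : ∀ y ∈ S, a * v y + b * w y = 0) (hA : IsPosSide S w A) : IsPosSide S v (S \ A) where
  subset := sdiff_subset
  mem_of_pos y hy hvy := by
    have : w y < 0 := by nlinarith [h y hy]
    exact mem_sdiff.2 ⟨hy, hA.notMem_of_neg y hy this⟩
  notMem_of_neg y hy hvy h' := by
    have : 0 < w y := by nlinarith [h y hy]
    exact (mem_sdiff.1 h').2 (hA.mem_of_pos y hy this)

end IsPosSide

noncomputable def signConflicts (S : Finset V) (v w : V → ℝ) : Finset V :=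
  {y ∈ S | v y * w y < 0}

lemma signConflicts_comm : signConflicts S v w = signConflicts S w v := by
  simp only [signConflicts, mul_comm]

lemma abs_mul_add_abs_mul_eq_zero {a b : ℝ} (h : a * b < 0) : |b| * a + |a| * b = 0 := by
  rcases mul_neg_iff.1 h with ⟨ha, hb⟩ | ⟨ha, hb⟩
  · rw [abs_of_pos ha, abs_of_neg hb]; ring
  · rw [abs_of_neg ha, abs_of_pos hb]; ring

lemma signConflicts_smul_add_smul_ssubset {x : V} (hx : x ∈ signConflicts S v w) :
    signConflicts S v (|w x| • v + |v x| • w) ⊂ signConflicts S v w := by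
  refine (ssubset_iff_of_subset fun y hy => ?_).2 ⟨x, hx, fun hx' => ?_⟩
  · simp only [signConflicts, mem_filter, Pi.add_apply, Pi.smul_apply, smul_eq_mul] at hy ⊢
    refine ⟨hy.1, lt_of_not_ge fun h => hy.2.not_ge ?_⟩
    nlinarith [mul_nonneg (abs_nonneg (w x)) (mul_self_nonneg (v y)),
      mul_nonneg (abs_nonneg (v x)) h]
  · simp only [signConflicts, mem_filter, Pi.add_apply, Pi.smul_apply, smul_eq_mul] at hx hx'
    rw [abs_mul_add_abs_mul_eq_zero hx.2, mul_zero] at hx'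
    exact lt_irrefl _ hx'.2

end PosSide

section AffineDependence

variable {V : Type*} [AddCommGroup V] [Module ℝ V]

structure IsAffineDependence (S : Finset V) (v : V → ℝ) : Prop where
  sum_eq_zero : ∑ y ∈ S, v y = 0
  sum_smul_eq_zero : ∑ y ∈ S, v y • y = 0
  exists_ne_zero : ∃ y ∈ S, v y ≠ 0

variable {S A : Finset V} {v w : V → ℝ}

namespace IsAffineDependence

lemma exists_pos (hv : IsAffineDependence S v) : ∃ y ∈ S, 0 < v y :=
  exists_pos_of_sum_zero_of_exists_nonzero v hv.sum_eq_zero hv.exists_ne_zero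

lemma exists_neg (hv : IsAffineDependence S v) : ∃ y ∈ S, v y < 0 := by
  obtain ⟨y, hy, h⟩ := exists_pos_of_sum_zero_of_exists_nonzero (s := S) (-v)
    (by simp [sum_neg_distrib, hv.sum_eq_zero]) (by simpa using hv.exists_ne_zero)
  exact ⟨y, hy, by simpa using h⟩

lemma smul_add_smul (hv : IsAffineDependence S v) (hw : IsAffineDependence S w) (a b : ℝ)
    (h : ∃ y ∈ S, (a • v + b • w) y ≠ 0) : IsAffineDependence S (a • v + b • w) where
  sum_eq_zero := by
    simp [sum_add_distrib, ← mul_sum, hv.sum_eq_zero, hw.sum_eq_zero]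
  sum_smul_eq_zero := by
    simp [add_smul, mul_smul, sum_add_distrib, ← smul_sum, hv.sum_smul_eq_zero,
      hw.sum_smul_eq_zero]
  exists_ne_zero := h

end IsAffineDependence

namespace IsPosSide

lemma nonempty (hv : IsAffineDependence S v) (hA : IsPosSide S v A) : A.Nonempty := by
  obtain ⟨y, hy, h⟩ := hv.exists_pos
  exact ⟨y, hA.mem_of_pos y hy h⟩

variable [DecidableEq V]

lemma sdiff_nonempty (hv : IsAffineDependence S v) (hA : IsPosSide S v A) :
    (S \ A).Nonempty := by
  obtain ⟨y, hy, h⟩ := hv.exists_neg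
  exact ⟨y, mem_sdiff.2 ⟨hy, hA.notMem_of_neg y hy h⟩⟩

lemma convexHull_inter_nonempty (hv : IsAffineDependence S v) (hA : IsPosSide S v A) :
    (convexHull ℝ (A : Set V) ∩ convexHull ℝ (↑(S \ A) : Set V)).Nonempty := by
  set T := {y ∈ S | 0 < v y}
  set N := {y ∈ S | ¬0 < v y}
  have hT : 0 < ∑ y ∈ T, v y := by
    obtain ⟨y, hy, h⟩ := hv.exists_pos
    exact sum_pos' (fun y hy => (mem_filter.1 hy).2.le) ⟨y, mem_filter.2 ⟨hy, h⟩, h⟩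
  have hTN : ∑ y ∈ T, v y + ∑ y ∈ N, v y = 0 := by
    rw [sum_filter_add_sum_filter_not, hv.sum_eq_zero]
  have hp : T.centerMass v id = N.centerMass v id := by
    refine centerMass_of_sum_add_sum_eq_zero hTN ?_
    rw [sum_filter_add_sum_filter_not]
    exact hv.sum_smul_eq_zero
  refine ⟨T.centerMass v id, centerMass_mem_convexHull T (fun y hy => (mem_filter.1 hy).2.le) hT
    fun y hy => hA.mem_of_pos y (mem_filter.1 hy).1 (mem_filter.1 hy).2, ?_⟩
  rw [hp, ← centerMass_filter_ne_zero]
  refine centerMass_mem_convexHull_of_nonpos _ (fun y hy => ?_) ?_ fun y hy => ?_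
  · exact not_lt.1 (mem_filter.1 (mem_filter.1 hy).1).2
  · rw [sum_filter_ne_zero]; linarith
  · obtain ⟨hy, hne⟩ := mem_filter.1 hy
    obtain ⟨hyS, hnpos⟩ := mem_filter.1 hy
    exact mem_sdiff.2 ⟨hyS, hA.notMem_of_neg y hyS (lt_of_le_of_ne (not_lt.1 hnpos) hne)⟩

end IsPosSide

lemma exists_isAffineDependence_isPosSide [DecidableEq V] {A B : Finset V} (hAB : Disjoint A B)
    (h : (convexHull ℝ (A : Set V) ∩ convexHull ℝ (B : Set V)).Nonempty) :
    ∃ v, IsAffineDependence (A ∪ B) v ∧ IsPosSide (A ∪ B) v A := by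
  obtain ⟨q, hqA, hqB⟩ := h
  obtain ⟨a, ha0, ha1, haq⟩ := mem_convexHull'.1 hqA
  obtain ⟨b, hb0, hb1, hbq⟩ := mem_convexHull'.1 hqB
  set v : V → ℝ := fun y => if y ∈ A then a y else -b y
  have hvA : ∀ y ∈ A, v y = a y := fun y hy => if_pos hy
  have hvB : ∀ y ∈ B, v y = -b y := fun y hy => if_neg (disjoint_right.1 hAB hy)
  have hA : ∑ y ∈ A, v y • y = q := haq ▸ sum_congr rfl fun y hy => by rw [hvA y hy]
  have hB : ∑ y ∈ B, v y • y = -q := by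
    rw [← hbq, ← sum_neg_distrib]
    exact sum_congr rfl fun y hy => by rw [hvB y hy, neg_smul]
  obtain ⟨y₀, hy₀, hay₀⟩ := exists_ne_zero_of_sum_ne_zero (ha1 ▸ one_ne_zero)
  have hv : IsAffineDependence (A ∪ B) v := by
    refine ⟨?_, by rw [sum_union hAB, hA, hB, add_neg_cancel], y₀, mem_union_left _ hy₀,
      by rwa [hvA y₀ hy₀]⟩
    rw [sum_union hAB, sum_congr rfl hvA, sum_congr rfl hvB, sum_neg_distrib, ha1, hb1,
      add_neg_cancel]
  refine ⟨v, hv, subset_union_left, fun y hy hpos => ?_, fun y _ hneg hyA => ?_⟩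
  · by_contra hyA
    have hyB := (mem_union.1 hy).resolve_left hyA
    linarith [hvB y hyB, hb0 y hyB]
  · linarith [hvA y hyA, ha0 y hyA]

end AffineDependence

section ErasePartsPair

variable {α : Type*} [DecidableEq α] {A B : Finset α} {x y : α}

lemma mem_eraseParts_pair {s t u : Finset α} :
    u ∈ eraseParts {s, t} y ↔ (u = s.erase y ∨ u = t.erase y) ∧ u.Nonempty := by
  simp [eraseParts]

lemma eraseParts_insert_pair (hxA : x ∉ A) (hxB : x ∉ B) :
    eraseParts {insert x A, B} x = eraseParts {A, insert x B} x := by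
  simp [eraseParts, erase_eq_of_notMem, hxA, hxB]

/-- The part containing `x` after erasing `y ≠ x` tells the two partitions apart. -/
lemma eraseParts_insert_pair_ne (hA : A.Nonempty) (hB : B.Nonempty) (hAB : Disjoint A B)
    (hxA : x ∉ A) (hxB : x ∉ B) (hyx : y ≠ x) :
    eraseParts {insert x A, B} y ≠ eraseParts {A, insert x B} y := by
  intro h
  have hx : insert x (A.erase y) ∈ eraseParts {A, insert x B} y := by
    rw [← h, mem_eraseParts_pair, erase_insert_of_ne hyx.symm]
    exact ⟨Or.inl rfl, insert_nonempty _ _⟩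
  obtain ⟨hxA' | hxB', -⟩ := mem_eraseParts_pair.1 hx
  · exact hxA (mem_of_mem_erase (hxA' ▸ mem_insert_self x _))
  have hAB' : A.erase y = B.erase y := by
    simpa [erase_insert_of_ne hyx.symm, erase_eq_of_notMem, hxA, hxB] using
      congrArg (·.erase x) hxB'
  have hA' : A.erase y = ∅ := by
    have := hAB.mono (erase_subset y A) (erase_subset y B)
    rwa [← hAB', disjoint_self] at this
  have hAy : A = {y} := ((erase_eq_empty_iff A y).1 hA').resolve_left hA.ne_empty
  have hBy : B = {y} := ((erase_eq_empty_iff B y).1 (hAB' ▸ hA')).resolve_left hB.ne_empty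
  rw [hAy, hBy] at hAB
  exact disjoint_singleton.1 hAB rfl

end ErasePartsPair

namespace TverbergPartition

variable {d : ℕ} {S A : Finset (EuclideanSpace ℝ (Fin d))}
  {v w : EuclideanSpace ℝ (Fin d) → ℝ}

lemma ext_parts {r : ℕ} {P Q : TverbergPartition S r} (h : P.1.parts = Q.1.parts) : P = Q :=
  Subtype.ext (Finpartition.ext h)

lemma adj_of_parts {r : ℕ} {P Q : TverbergPartition S r} {B : Finset (EuclideanSpace ℝ (Fin d))}
    {x : EuclideanSpace ℝ (Fin d)} (hxS : x ∈ S) (hA : A.Nonempty) (hB : B.Nonempty)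
    (hAB : Disjoint A B) (hxA : x ∉ A) (hxB : x ∉ B)
    (hP : P.1.parts = {insert x A, B}) (hQ : Q.1.parts = {A, insert x B}) :
    (tverbergGraph S r).Adj P Q := by
  have hne : ∀ y, y ≠ x → eraseParts P.1.parts y ≠ eraseParts Q.1.parts y := fun y hyx => by
    rw [hP, hQ]
    exact eraseParts_insert_pair_ne hA hB hAB hxA hxB hyx
  refine ⟨?_, x, ⟨hxS, by rw [hP, hQ]; exact eraseParts_insert_pair hxA hxB⟩,
    fun y hy => by_contra fun hyx => hne y hyx hy.2⟩
  rintro rfl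
  obtain ⟨a, ha⟩ := hA
  exact hne a (ne_of_mem_of_not_mem ha hxA) rfl

lemma exists_parts_eq (hv : IsAffineDependence S v)
    (hA : IsPosSide S v A) : ∃ P : TverbergPartition S 2, P.1.parts = {A, S \ A} := by
  let F := (Finpartition.indiscrete (hA.nonempty hv).ne_empty).extend
    (hA.sdiff_nonempty hv).ne_empty disjoint_sdiff (union_sdiff_of_subset hA.subset)
  have hF : F.parts = {A, S \ A} := by simp [F, pair_comm]
  have hcard : F.parts.card = 2 := by
    simp only [F, Finpartition.card_extend, Finpartition.indiscrete_parts, card_singleton]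
  refine ⟨⟨F, hcard, ?_⟩, hF⟩
  rw [Finpartition.IsTverberg, hF, set_biInter_insert, set_biInter_singleton]
  exact hA.convexHull_inter_nonempty hv

def Compatible (P : TverbergPartition S 2) (v : EuclideanSpace ℝ (Fin d) → ℝ) : Prop :=
  ∃ A, IsPosSide S v A ∧ P.1.parts = {A, S \ A}

lemma exists_compatible (P : TverbergPartition S 2) :
    ∃ v, IsAffineDependence S v ∧ P.Compatible v := by
  obtain ⟨A, B, hne, hparts⟩ := card_eq_two.1 P.2.1
  have hAB : Disjoint A B := (supIndep_pair hne).1 (hparts ▸ P.1.supIndep)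
  have hS : A ∪ B = S := by simpa [hparts] using P.1.sup_parts
  have hq : (convexHull ℝ (A : Set (EuclideanSpace ℝ (Fin d))) ∩
      convexHull ℝ (B : Set (EuclideanSpace ℝ (Fin d)))).Nonempty := by
    simpa [Finpartition.IsTverberg, hparts, set_biInter_insert] using P.2.2
  obtain ⟨v, hv, hA⟩ := exists_isAffineDependence_isPosSide hAB hq
  rw [hS] at hv hA
  exact ⟨v, hv, A, hA, by rw [hparts, ← hS, union_sdiff_cancel_left hAB]⟩

variable {P Q : TverbergPartition S 2}

lemma reachable_of_isPosSide (hv : IsAffineDependence S v) (hA : IsPosSide S v A)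
    (hP : P.1.parts = {A, S \ A})
    (hQ : Q.1.parts = {{y ∈ S | 0 < v y}, S \ {y ∈ S | 0 < v y}}) :
    (tverbergGraph S 2).Reachable P Q := by
  induction A using Finset.strongInduction generalizing P with
  | H A ih =>
  by_cases hmin : A = {y ∈ S | 0 < v y}
  · subst hmin
    rw [ext_parts (hP.trans hQ.symm)]
  have hpos : {y ∈ S | 0 < v y} ⊆ A := fun y hy =>
    hA.mem_of_pos y (mem_filter.1 hy).1 (mem_filter.1 hy).2
  obtain ⟨x, hxA, hx⟩ := exists_of_ssubset (ssubset_of_subset_of_ne hpos (Ne.symm hmin))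
  have hxS := hA.subset hxA
  have hA' := hA.erase (x := x) fun h => hx (mem_filter.2 ⟨hxS, h⟩)
  obtain ⟨R, hR⟩ := exists_parts_eq hv hA'
  have hPR : (tverbergGraph S 2).Adj P R := by
    refine adj_of_parts hxS (hA'.nonempty hv) (hA.sdiff_nonempty hv)
      (disjoint_sdiff.mono_left (erase_subset x A)) (notMem_erase x A)
      (fun h => (mem_sdiff.1 h).2 hxA) ?_ ?_
    · rwa [insert_erase hxA]
    · rwa [← sdiff_erase hxS]
  exact hPR.reachable.trans (ih _ (erase_ssubset hxA) hA' hR)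

lemma Compatible.reachable (hv : IsAffineDependence S v) (hP : P.Compatible v)
    (hQ : Q.Compatible v) : (tverbergGraph S 2).Reachable P Q := by
  obtain ⟨A, hA, hPA⟩ := hP
  obtain ⟨B, hB, hQB⟩ := hQ
  obtain ⟨R, hR⟩ := exists_parts_eq hv isPosSide_filter_pos
  exact (reachable_of_isPosSide hv hA hPA hR).trans (reachable_of_isPosSide hv hB hQB hR).symm

lemma Compatible.of_smul_add_smul_eq_zero {a b : ℝ} (ha : 0 < a) (hb : 0 < b)
    (h : ∀ y ∈ S, a * v y + b * w y = 0) (hP : P.Compatible w) : P.Compatible v := by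
  obtain ⟨A, hA, hPA⟩ := hP
  refine ⟨S \ A, hA.sdiff_of_smul_add_smul_eq_zero ha hb h, ?_⟩
  rw [hPA, Finset.sdiff_sdiff_eq_self hA.subset, pair_comm]

/-- With no sign conflicts, the points where `v` or `w` is positive form a side for both. -/
lemma reachable_of_signConflicts_eq_empty (hv : IsAffineDependence S v)
    (hw : IsAffineDependence S w) (hc : signConflicts S v w = ∅) (hP : P.Compatible v)
    (hQ : Q.Compatible w) : (tverbergGraph S 2).Reachable P Q := by
  have hvw : ∀ y ∈ S, ¬v y * w y < 0 := filter_eq_empty_iff.1 hc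
  set A := {y ∈ S | 0 < v y ∨ 0 < w y}
  have hAv : IsPosSide S v A :=
    ⟨filter_subset _ _, fun y hy h => mem_filter.2 ⟨hy, .inl h⟩, fun y hy h hyA =>
      (mem_filter.1 hyA).2.elim h.not_gt fun h' => hvw y hy (mul_neg_of_neg_of_pos h h')⟩
  have hAw : IsPosSide S w A :=
    ⟨filter_subset _ _, fun y hy h => mem_filter.2 ⟨hy, .inr h⟩, fun y hy h hyA =>
      (mem_filter.1 hyA).2.elim (fun h' => hvw y hy (mul_neg_of_pos_of_neg h' h)) h.not_gt⟩
  obtain ⟨R, hR⟩ := exists_parts_eq hv hAv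
  exact (hP.reachable hv ⟨A, hAv, hR⟩).trans (Compatible.reachable hw ⟨A, hAw, hR⟩ hQ)

theorem reachable_of_compatible (hv : IsAffineDependence S v) (hw : IsAffineDependence S w)
    (hP : P.Compatible v) (hQ : Q.Compatible w) : (tverbergGraph S 2).Reachable P Q := by
  induction hn : (signConflicts S v w).card using Nat.strong_induction_on generalizing v w P Q
    with | _ n ih =>
  obtain hc | ⟨x, hx⟩ := (signConflicts S v w).eq_empty_or_nonempty
  · exact reachable_of_signConflicts_eq_empty hv hw hc hP hQ
  set u := |w x| • v + |v x| • w with hu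
  by_cases hu0 : ∃ y ∈ S, u y ≠ 0
  · have hu' : IsAffineDependence S u := hv.smul_add_smul hw _ _ hu0
    have hvu : (signConflicts S v u).card < n :=
      hn ▸ card_lt_card (signConflicts_smul_add_smul_ssubset hx)
    have huw : (signConflicts S u w).card < n := by
      rw [← hn, signConflicts_comm, hu, add_comm, signConflicts_comm (v := v)]
      exact card_lt_card (signConflicts_smul_add_smul_ssubset (signConflicts_comm ▸ hx))
    obtain ⟨R, hR⟩ := exists_parts_eq hu' isPosSide_filter_pos
    have hRu : R.Compatible u := ⟨_, isPosSide_filter_pos, hR⟩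
    exact (ih _ hvu hv hu' hP hRu rfl).trans (ih _ huw hu' hw hRu hQ rfl)
  · push Not at hu0
    have hvw := (mem_filter.1 hx).2
    exact hP.reachable hv (hQ.of_smul_add_smul_eq_zero
      (abs_pos.2 (right_ne_zero_of_mul hvw.ne)) (abs_pos.2 (left_ne_zero_of_mul hvw.ne)) hu0)

end TverbergPartition

/-- The Radon partition graph `G_T[S,2]` of any finite set of points in `ℝ^d` is
connected (a graph with no vertices or a single vertex counts as connected, so we state
preconnectedness, which for nonempty graphs is connectedness). -/
theorem radonGraph_connected (d : ℕ) (S : Finset (EuclideanSpace ℝ (Fin d))) :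
    (tverbergGraph S 2).Preconnected := by
  intro P Q
  obtain ⟨v, hv, hPv⟩ := P.exists_compatible
  obtain ⟨w, hw, hQw⟩ := Q.exists_compatible
  exact TverbergPartition.reachable_of_compatible hv hw hPv hQw
end
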